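/- arXiv:0810.4224 — 2 statements merged into one kernel-verified Lean document; each statement's English description precedes it below -/
import Mathlib

section
/- Let $L/K$ be a finite Galois extension of fields with group $G$, let $I$ be an abelian group equipped with a surjective homomorphism onto $G$ (write $\mathfrak{a} \mapsto \sigma_\mathfrak{a}$), and let $\lambda, \lambda' \colon I \to L^*$ be two one-cocycles (i.e., $\lambda(\mathfrak{a}\mathfrak{b}) = \lambda(\mathfrak{a}) \cdot \sigma_\mathfrak{a}(\lambda(\mathfrak{b}))$ for all $\mathfrak{a},\mathfrak{b}$) that agree on the kernel of $I \to G$. Then $\lambda$ and $\lambda'$ are cohomologous: there exists $u \in L^*$ with $\lambda'(\mathfrak{a}) = \lambda(\mathfrak{a}) \cdot \sigma_\mathfrak{a}(u)/u$ for all $\mathfrak{a} \in I$. -/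
/-!
Since `Lˣ` is commutative, `μ = λ' / λ` is again a cocycle, and it is trivial on the kernel `N` of
`I → G`. The cocycle identity `μ (a k) = σ_a (μ k) · μ a` then shows that `μ` is constant on the
cosets `a N`, so `μ` descends along the surjection to a cocycle on `G`, which is a coboundary by
Hilbert's Theorem 90.
-/

namespace groupCohomology

/-- The cocycle condition for `I` acting on `M` through `π`. -/
def IsMulCocycle₁Along {I G M : Type*} [Group I] [Group G] [CommGroup M] [SMul G M]
    (π : I →* G) (f : I → M) : Prop :=
  ∀ a b, f (a * b) = π a • f b * f a

namespace IsMulCocycle₁Along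

variable {I G M : Type*} [Group I] [Group G] [CommGroup M] [MulDistribMulAction G M]
  {π : I →* G} {f f' : I → M}

theorem div (hf : IsMulCocycle₁Along π f) (hf' : IsMulCocycle₁Along π f') :
    IsMulCocycle₁Along π (f' / f) := fun a b ↦ by
  simp only [Pi.div_apply, hf a b, hf' a b, smul_div']
  exact (div_mul_div_comm _ _ _ _).symm

theorem eq_of_map_eq (hf : IsMulCocycle₁Along π f) (hker : ∀ k, π k = 1 → f k = 1) {a b : I}
    (hab : π a = π b) : f a = f b := by
  have hk : π (a⁻¹ * b) = 1 := by rw [map_mul, map_inv, hab, inv_mul_cancel]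
  calc f a = π a • f (a⁻¹ * b) * f a := by rw [hker _ hk, smul_one, one_mul]
    _ = f b := by rw [← hf, mul_inv_cancel_left]

theorem exists_isMulCocycle₁_comp_eq (hπ : Function.Surjective π) (hf : IsMulCocycle₁Along π f)
    (hker : ∀ k, π k = 1 → f k = 1) :
    ∃ g : G → M, IsMulCocycle₁ g ∧ ∀ a, g (π a) = f a := by
  set s := Function.surjInv hπ
  have hs : ∀ g, π (s g) = g := Function.surjInv_eq hπ
  refine ⟨f ∘ s, fun g h ↦ ?_, fun a ↦ hf.eq_of_map_eq hker (hs _)⟩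
  have hgh : π (s g * s h) = π (s (g * h)) := by rw [map_mul, hs, hs, hs]
  simp only [Function.comp_apply]
  rw [← hf.eq_of_map_eq hker hgh, hf, hs]

theorem exists_smul_div_eq {K L : Type*} [Field K] [Field L] [Algebra K L]
    [FiniteDimensional K L] {π : I →* Gal(L/K)} (hπ : Function.Surjective π) {f : I → Lˣ}
    (hf : IsMulCocycle₁Along π f) (hker : ∀ k, π k = 1 → f k = 1) :
    ∃ u : Lˣ, ∀ a, π a • u / u = f a := by
  obtain ⟨g, hg, hgf⟩ := hf.exists_isMulCocycle₁_comp_eq hπ hker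
  obtain ⟨u, hu⟩ := isMulCoboundary₁_of_isMulCocycle₁_of_aut_to_units g hg
  exact ⟨u, fun a ↦ by rw [hu, hgf]⟩

theorem of_val {K L : Type*} [Field K] [Field L] [Algebra K L] {π : I →* Gal(L/K)} {f : I → Lˣ}
    (hf : ∀ a b, (f (a * b) : L) = f a * π a (f b)) : IsMulCocycle₁Along π f := fun a b ↦ by
  ext
  simp [hf, mul_comm]

end IsMulCocycle₁Along

end groupCohomology

open groupCohomology in
theorem cocycles_agreeing_on_kernel_cohomologous_general
    (K L : Type*) [Field K] [Field L] [Algebra K L] [FiniteDimensional K L]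
    (I : Type*) [CommGroup I] (π : I →* (L ≃ₐ[K] L)) (hπ : Function.Surjective π)
    (lam lam' : I → Lˣ)
    (hlam : ∀ a b : I, (lam (a * b) : L) = (lam a : L) * π a (lam b : L))
    (hlam' : ∀ a b : I, (lam' (a * b) : L) = (lam' a : L) * π a (lam' b : L))
    (hagree : ∀ a : I, π a = 1 → lam a = lam' a) :
    ∃ u : Lˣ, ∀ a : I, (lam' a : L) = (lam a : L) * (π a (u : L) / (u : L)) := by
  have hμ : IsMulCocycle₁Along π (lam' / lam) :=
    (IsMulCocycle₁Along.of_val hlam).div (IsMulCocycle₁Along.of_val hlam')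
  obtain ⟨u, hu⟩ := hμ.exists_smul_div_eq hπ fun k hk ↦ by rw [Pi.div_apply, hagree k hk, div_self']
  exact ⟨u, fun a ↦ by simpa using congrArg Units.val (div_eq_iff_eq_mul'.1 (hu a).symm)⟩

/-- two one-cocycles on an abelian group `I` acting on `L` through a
surjection onto `Gal(L/K)` that agree on the kernel of the surjection are cohomologous
(Hilbert 90). -/
theorem cocycles_agreeing_on_kernel_cohomologous
    (K L : Type*) [Field K] [Field L] [Algebra K L] [IsGalois K L] [FiniteDimensional K L]
    (I : Type*) [CommGroup I] (π : I →* (L ≃ₐ[K] L)) (hπ : Function.Surjective π)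
    (lam lam' : I → Lˣ)
    (hlam : ∀ a b : I, (lam (a * b) : L) = (lam a : L) * π a (lam b : L))
    (hlam' : ∀ a b : I, (lam' (a * b) : L) = (lam' a : L) * π a (lam' b : L))
    (hagree : ∀ a : I, π a = 1 → lam a = lam' a) :
    ∃ u : Lˣ, ∀ a : I, (lam' a : L) = (lam a : L) * (π a (u : L) / (u : L)) :=
  cocycles_agreeing_on_kernel_cohomologous_general K L I π hπ lam lam' hlam hlam' hagree
end

section
/- Let $L/K$ be a finite Galois extension with abelian Galois group $G$ of order $n$, and for each element $\sigma$ of a finite index set $\Phi$ let $\chi_\sigma \colon G \to \mathbb{C}^*$ be a character. Suppose $\lambda \colon G \to L^*$ is a one-cocycle and define, for $\sigma \in \Phi$ and units $u_\mathfrak{a} \in \mathbb{C}^*$, the linear operator $\operatorname{pr}(u) = \sum_{\mathfrak{a} \in G} \big( \sum_{\sigma \in \Phi} \chi_\sigma^{-1}(\mathfrak{a}) \big) c_\mathfrak{a} \cdot \mathfrak{a}^{-1}(u)$ where $c_\mathfrak{a} = \mathfrak{a}^{-1}(\lambda(\mathfrak{a}))$. Then $\operatorname{pr}^2 = n \cdot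 \operatorname{pr}$ as $K$-linear endomorphisms of $L$, provided the characters $\chi_\sigma$ are pairwise distinct and satisfy $\chi_\sigma(\mathfrak{a}) = \sigma(\psi(\mathfrak{a}))/\psi(\mathfrak{a})$ for a multiplicative splitting $\psi$ of $\lambda$ on the subgroup where $\lambda$ takes values in $K^*$. -/
/-!
Write `pr_S u = ∑_a S(a) c_a a⁻¹(u)` with `c_a = a⁻¹(λ(a))`. The cocycle identity for `λ` gives
`c_a · a⁻¹(c_b) = c_{ba}`, so these operators compose like elements of the group algebra:
`pr_S ∘ pr_T = pr_{S * T}` with `(S * T)(c) = ∑_a S(a) T(c a⁻¹)`. For `S = ∑_σ χ_σ⁻¹`, the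
orthogonality of distinct characters gives `S * S = n · S`.
-/

open Finset

section Characters

variable {G R Φ : Type*} [Group G] [Fintype G] [CommRing R] [IsDomain R]

theorem MonoidHom.sum_apply_mul_inv_apply [DecidableEq (G →* Rˣ)] (χ ψ : G →* Rˣ) :
    ∑ a, ((ψ a * (χ a)⁻¹ : Rˣ) : R) = if χ = ψ then (Fintype.card G : R) else 0 := by
  split_ifs with h
  · simp [h]
  · refine sum_hom_units_eq_zero ((Units.coeHom R).comp (ψ * χ⁻¹)) fun h1 => h ?_
    rw [← MonoidHom.comp_one (Units.coeHom R), MonoidHom.cancel_left Units.coeHom_injective] at h1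
    exact (mul_inv_eq_one.mp h1).symm

variable [Fintype Φ]

def invCharSum (χ : Φ → G →* Rˣ) (a : G) : R :=
  ∑ σ, (((χ σ a)⁻¹ : Rˣ) : R)

theorem MonoidHom.sum_inv_mul_inv_apply_mul_inv [DecidableEq (G →* Rˣ)] (χ ψ : G →* Rˣ) (c : G) :
    ∑ a, (((χ a)⁻¹ : Rˣ) : R) * (((ψ (c * a⁻¹))⁻¹ : Rˣ) : R)
      = (if χ = ψ then (Fintype.card G : R) else 0) * (((ψ c)⁻¹ : Rˣ) : R) := by
  rw [← MonoidHom.sum_apply_mul_inv_apply, sum_mul]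
  refine sum_congr rfl fun a _ => ?_
  simp only [map_mul, map_inv, mul_inv_rev, inv_inv, Units.val_mul]
  ring

theorem invCharSum_convolution_self (χ : Φ → G →* Rˣ) (hχ : Function.Injective χ) (c : G) :
    ∑ a, invCharSum χ a * invCharSum χ (c * a⁻¹) = Fintype.card G * invCharSum χ c := by
  classical
  simp only [invCharSum, sum_mul_sum]
  rw [sum_comm]
  refine (sum_congr rfl fun σ _ => ?_).trans (mul_sum _ _ _).symm
  rw [sum_comm]
  simp only [MonoidHom.sum_inv_mul_inv_apply_mul_inv, hχ.eq_iff, ite_mul, zero_mul, sum_ite_eq,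
    mem_univ, if_true]

theorem convolution_self_eq_card_mul_of_invCharSum_eq {K : Type*} [Field K] [Algebra K R]
    (χ : Φ → G →* Rˣ) (hχ : Function.Injective χ) (S : G → K)
    (hS : ∀ a, invCharSum χ a = algebraMap K R (S a)) (c : G) :
    ∑ a, S a * S (c * a⁻¹) = Fintype.card G * S c := by
  apply (algebraMap K R).injective
  simpa only [map_sum, map_mul, map_natCast, ← hS] using invCharSum_convolution_self χ hχ c

end Characters

section CocycleOperator

variable {K L : Type*} [CommSemiring K] [CommSemiring L] [Algebra K L]

theorem inv_apply_mul_inv_apply_of_cocycle (lam : (L ≃ₐ[K] L) → L)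
    (hlam : ∀ a b, lam (a * b) = lam a * a (lam b)) (a b : L ≃ₐ[K] L) :
    a⁻¹ (lam a) * a⁻¹ (b⁻¹ (lam b)) = (b * a)⁻¹ (lam (b * a)) := by
  rw [hlam, mul_inv_rev, AlgEquiv.mul_apply, map_mul, map_mul,
    ← AlgEquiv.mul_apply b⁻¹ b, inv_mul_cancel, AlgEquiv.one_apply, mul_comm]

variable [Fintype (L ≃ₐ[K] L)]

def cocycleOperator (S : (L ≃ₐ[K] L) → K) (lam : (L ≃ₐ[K] L) → L) (u : L) : L :=
  ∑ a, algebraMap K L (S a) * (a⁻¹ (lam a) * a⁻¹ u)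

theorem cocycleOperator_comp (lam : (L ≃ₐ[K] L) → L)
    (hlam : ∀ a b, lam (a * b) = lam a * a (lam b)) (S T : (L ≃ₐ[K] L) → K) (u : L) :
    cocycleOperator S lam (cocycleOperator T lam u)
      = cocycleOperator (fun c => ∑ a, S a * T (c * a⁻¹)) lam u := by
  unfold cocycleOperator
  calc _ = ∑ a, ∑ b, algebraMap K L (S a * T b) * ((b * a)⁻¹ (lam (b * a)) * (b * a)⁻¹ u) := by
        refine sum_congr rfl fun a _ => ?_
        rw [map_sum, mul_sum, mul_sum]
        refine sum_congr rfl fun b _ => ?_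
        rw [← inv_apply_mul_inv_apply_of_cocycle lam hlam, mul_inv_rev, AlgEquiv.mul_apply,
          map_mul, map_mul, map_mul, AlgEquiv.commutes]
        ring
    _ = ∑ a, ∑ c, algebraMap K L (S a * T (c * a⁻¹)) * (c⁻¹ (lam c) * c⁻¹ u) := by
        refine sum_congr rfl fun a _ => ?_
        exact Fintype.sum_equiv (Equiv.mulRight a) _ _ fun b => by simp
    _ = _ := by
        rw [sum_comm]
        simp only [map_sum, sum_mul]

theorem cocycleOperator_const_mul (k : K) (S : (L ≃ₐ[K] L) → K) (lam : (L ≃ₐ[K] L) → L) (u : L) :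
    cocycleOperator (fun a => k * S a) lam u = algebraMap K L k * cocycleOperator S lam u := by
  simp only [cocycleOperator, map_mul, mul_sum, mul_assoc]

end CocycleOperator

theorem pr_squared_eq_n_pr_general (K L : Type*) [Field K] [Field L] [Algebra K L]
    [Algebra K ℂ] [Fintype (L ≃ₐ[K] L)]
    (n : ℕ) (hn : Nat.card (L ≃ₐ[K] L) = n)
    (Φ : Type*) [Fintype Φ] (χ : Φ → ((L ≃ₐ[K] L) →* ℂˣ)) (hχ : Function.Injective χ)
    (lam : (L ≃ₐ[K] L) → Lˣ)
    (hlam : ∀ a b : L ≃ₐ[K] L, (lam (a * b) : L) = (lam a : L) * a ((lam b : L)))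
    (S : (L ≃ₐ[K] L) → K)
    (hS : ∀ a : L ≃ₐ[K] L, (∑ σ : Φ, (((χ σ a)⁻¹ : ℂˣ) : ℂ)) = algebraMap K ℂ (S a)) :
    ∀ u : L,
      (∑ a : L ≃ₐ[K] L, algebraMap K L (S a) * (a⁻¹ ((lam a : L)) *
          a⁻¹ (∑ b : L ≃ₐ[K] L, algebraMap K L (S b) * (b⁻¹ ((lam b : L)) * b⁻¹ u))))
        = (n : L) *
          (∑ a : L ≃ₐ[K] L, algebraMap K L (S a) * (a⁻¹ ((lam a : L)) * a⁻¹ u)) := by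
  intro u
  have hconv : (fun c => ∑ a, S a * S (c * a⁻¹)) = fun c => (n : K) * S c := by
    ext c
    rw [convolution_self_eq_card_mul_of_invCharSum_eq χ hχ S hS c, ← hn, Nat.card_eq_fintype_card]
  have hcomp := cocycleOperator_comp (fun a => (lam a : L)) hlam S S u
  rw [hconv, cocycleOperator_const_mul, map_natCast] at hcomp
  exact hcomp

/-- Proposition 4.4(i) abstracted: let `L/K` be finite Galois with abelian
Galois group `G` of order `n`, `χ_σ (σ ∈ Φ)` pairwise distinct characters `G → ℂ^*`
whose coefficient sums `S(𝔞) = ∑_σ χ_σ(𝔞)⁻¹` lie in `K` (as follows from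
`χ_σ(𝔞) = σ(ψ(𝔞))/ψ(𝔞)` for a multiplicative splitting `ψ` of the one-cocycle `λ`),
and `c_𝔞 = 𝔞⁻¹(λ(𝔞))` for a one-cocycle `λ : G → L^*`. Then the `K`-linear operator
`pr(u) = ∑_{𝔞 ∈ G} S(𝔞) c_𝔞 𝔞⁻¹(u)` on `L` satisfies `pr² = n · pr`. -/
theorem pr_squared_eq_n_pr (K L : Type*) [Field K] [Field L] [Algebra K L]
    [Algebra K ℂ] [IsGalois K L] [FiniteDimensional K L] [Fintype (L ≃ₐ[K] L)]
    (n : ℕ) (hn : Nat.card (L ≃ₐ[K] L) = n)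
    (habelian : ∀ g h : L ≃ₐ[K] L, g * h = h * g)
    (Φ : Type*) [Fintype Φ] (χ : Φ → ((L ≃ₐ[K] L) →* ℂˣ)) (hχ : Function.Injective χ)
    (lam : (L ≃ₐ[K] L) → Lˣ)
    (hlam : ∀ a b : L ≃ₐ[K] L, (lam (a * b) : L) = (lam a : L) * a ((lam b : L)))
    (S : (L ≃ₐ[K] L) → K)
    (hS : ∀ a : L ≃ₐ[K] L, (∑ σ : Φ, (((χ σ a)⁻¹ : ℂˣ) : ℂ)) = algebraMap K ℂ (S a)) :
    ∀ u : L,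
      (∑ a : L ≃ₐ[K] L, algebraMap K L (S a) * (a⁻¹ ((lam a : L)) *
          a⁻¹ (∑ b : L ≃ₐ[K] L, algebraMap K L (S b) * (b⁻¹ ((lam b : L)) * b⁻¹ u))))
        = (n : L) *
          (∑ a : L ≃ₐ[K] L, algebraMap K L (S a) * (a⁻¹ ((lam a : L)) * a⁻¹ u)) :=
  pr_squared_eq_n_pr_general K L n hn Φ χ hχ lam hlam S hS
end
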